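/- Let (I_n, ||·||_n) for n ≥ 1 be a sequence of nonarchimedean Banach spaces over a complete nonarchimedean field, with continuous linear transition maps I_{n+1} → I_n that have dense image and satisfy ||f||_n ≤ ||f||_{n+1} for f in the image of I_{n+1}. Then the map ψ : ∏_{n≥1} I_n → ∏_{n≥1} I_n defined by ψ((f_n)_n) = (f_n − f_{n+1})_n is surjective; in particular the first derived inverse limit R^1 lim I_n vanishes. -/

import Mathlib

/-!
Write `ψ = 1 - S`, where `S` shifts a sequence and pushes it down along the transition maps.
Since the transition maps do not increase norms, `‖(Sᵏ z)ₙ‖ ≤ ‖z_{n+k}‖`; so for `z` tending to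
zero the Neumann series `∑ₖ Sᵏ z` converges coordinatewise (the spaces are complete and
nonarchimedean) and solves `ψ g = z`. For an arbitrary target `y`, density of the transition maps
gives `x` with `ψ x - y` tending to zero, and then `ψ (x - g) = y` for a solution `g` of
`ψ g = ψ x - y`.
-/

open Filter Topology

theorem sub_map_tsum_iterate_eq {G : Type*} [AddCommGroup G] [TopologicalSpace G]
    [IsTopologicalAddGroup G] [T2Space G] (S : G →+ G) (hS : Continuous S) {z : G}
    (hz : Summable fun k => S^[k] z) :
    (∑' k, S^[k] z) - S (∑' k, S^[k] z) = z := by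
  rw [hz.map_tsum S hS, hz.tsum_eq_zero_add]
  simp only [Function.iterate_zero_apply, Function.iterate_succ_apply', add_sub_cancel_right]

namespace InverseSequence

variable {I : ℕ → Type*} [∀ n, NormedAddCommGroup (I n)] (T : ∀ n, I (n + 1) →+ I n)

def shift : (∀ n, I n) →+ (∀ n, I n) :=
  AddMonoidHom.mk' (fun f n => T n (f (n + 1))) fun f g => by ext n; simp

@[simp]
theorem shift_apply (f : ∀ n, I n) (n : ℕ) : shift T f n = T n (f (n + 1)) := rfl

theorem exists_norm_sub_shift_sub_lt (hdense : ∀ n, DenseRange (T n)) (y : ∀ n, I n)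
    {ε : ℕ → ℝ} (hε : ∀ n, 0 < ε n) : ∃ x, ∀ n, ‖(x - shift T x - y) n‖ < ε n := by
  have happrox : ∀ n (p : I n), ∃ u, ‖p - T n u‖ < ε n := fun n p => by
    obtain ⟨u, hu⟩ := Metric.denseRange_iff.mp (hdense n) p (ε n) (hε n)
    exact ⟨u, by rwa [← dist_eq_norm]⟩
  choose u hu using happrox
  let x : ∀ n, I n := fun n => Nat.rec (motive := I) 0 (fun n xn => u n (xn - y n)) n
  refine ⟨x, fun n => ?_⟩
  have hx : x (n + 1) = u n (x n - y n) := rfl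
  simpa only [Pi.sub_apply, shift_apply, hx, sub_right_comm] using hu n (x n - y n)

variable {T} (hnorm : ∀ n (f : I (n + 1)), ‖T n f‖ ≤ ‖f‖)
include hnorm

theorem continuous_shift : Continuous (shift T) :=
  continuous_pi fun n =>
    (AddMonoidHomClass.continuous_of_bound (T n) 1 fun f => by
      simpa only [one_mul] using hnorm n f).comp (continuous_apply (n + 1))

theorem norm_shift_iterate_apply_le (z : ∀ n, I n) (k n : ℕ) :
    ‖(shift T)^[k] z n‖ ≤ ‖z (n + k)‖ := by
  induction k generalizing n with
  | zero => rfl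
  | succ k ih =>
    rw [Function.iterate_succ_apply', shift_apply, ← add_assoc, add_right_comm]
    exact (hnorm n _).trans (ih (n + 1))

theorem exists_sub_shift_eq_of_tendsto_norm [∀ n, CompleteSpace (I n)]
    [∀ n, IsUltrametricDist (I n)] {z : ∀ n, I n}
    (hz : Tendsto (fun n => ‖z n‖) atTop (𝓝 0)) : ∃ g, g - shift T g = z := by
  have hsummable : Summable fun k => (shift T)^[k] z := by
    refine Pi.summable.mpr fun n => NonarchimedeanAddGroup.summable_of_tendsto_cofinite_zero ?_
    rw [Nat.cofinite_eq_atTop, tendsto_zero_iff_norm_tendsto_zero]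
    exact squeeze_zero (fun _ => norm_nonneg _) (norm_shift_iterate_apply_le hnorm z · n)
      (hz.comp (tendsto_atTop_mono (Nat.le_add_left · n) tendsto_id))
  exact ⟨_, sub_map_tsum_iterate_eq _ (continuous_shift hnorm) hsummable⟩

end InverseSequence

open InverseSequence

theorem stmt_0_general {K : Type*} [NontriviallyNormedField K]
    (I : ℕ → Type*) [∀ n, NormedAddCommGroup (I n)] [∀ n, NormedSpace K (I n)]
    [∀ n, CompleteSpace (I n)] [∀ n, IsUltrametricDist (I n)]
    (T : ∀ n, I (n + 1) →L[K] I n)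
    (hdense : ∀ n, DenseRange (T n))
    (hnorm : ∀ n (f : I (n + 1)), ‖T n f‖ ≤ ‖f‖) :
    Function.Surjective (fun f : (∀ n, I n) => fun n => f n - T n (f (n + 1))) := by
  let T' : ∀ n, I (n + 1) →+ I n := fun n => T n
  intro y
  obtain ⟨x, hx⟩ := exists_norm_sub_shift_sub_lt T' hdense y
    (ε := fun n => 1 / ((n : ℝ) + 1)) fun n => by positivity
  obtain ⟨g, hg⟩ := exists_sub_shift_eq_of_tendsto_norm (T := T') hnorm
    (squeeze_zero (fun _ => norm_nonneg _) (fun n => (hx n).le)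
      tendsto_one_div_add_atTop_nhds_zero_nat)
  refine ⟨x - g, ?_⟩
  change x - g - shift T' (x - g) = y
  rw [map_sub, sub_sub_sub_comm, hg, sub_sub_cancel]

/-- R¹lim of a sequence of nonarchimedean Banach spaces with dense,
norm-nonincreasing transition maps vanishes: the difference map ψ is surjective. -/
theorem stmt_0 {K : Type*} [NontriviallyNormedField K] [CompleteSpace K]
    [IsUltrametricDist K]
    (I : ℕ → Type*) [∀ n, NormedAddCommGroup (I n)] [∀ n, NormedSpace K (I n)]
    [∀ n, CompleteSpace (I n)] [∀ n, IsUltrametricDist (I n)]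
    (T : ∀ n, I (n + 1) →L[K] I n)
    (hdense : ∀ n, DenseRange (T n))
    (hnorm : ∀ n (f : I (n + 1)), ‖T n f‖ ≤ ‖f‖) :
    Function.Surjective (fun f : (∀ n, I n) => fun n => f n - T n (f (n + 1))) :=
  stmt_0_general I T hdense hnorm
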